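/- arXiv:1406.3075 — 8 statements merged into one kernel-verified Lean document; each statement's English description precedes it below -/
import Mathlib

section
/- For the SAIS system without awareness decay and κ + β ≠ βₐ, the function a(s) = C₀(δ - (κ+β)s)^{βₐ/(κ+β)} + κ(δ - βₐ s)/(βₐ(κ+β-βₐ)) satisfies the trajectory ODE da/ds = (κs - βₐ a)/(δ - (κ+β)s) at every s with δ - (κ+β)s > 0, for any constant C₀. -/
/-!
The trajectory equation `a' = (κ s - βₐ a) / (δ - (κ + β) s)` is linear in `a`, so its solutions
are a particular solution plus solutions of the homogeneous equation `a' = -βₐ a / (δ - (κ + β) s)`.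
The homogeneous solutions are the powers `C₀ (δ - (κ + β) s) ^ (βₐ / (κ + β))`, and an affine
particular solution exists exactly when `κ + β ≠ βₐ`.
-/

theorem hasDerivAt_const_mul_sub_mul_rpow_div {k b δ C s : ℝ} (hk : k ≠ 0)
    (hs : 0 < δ - k * s) :
    HasDerivAt (fun s => C * (δ - k * s) ^ (b / k))
      (-b * (C * (δ - k * s) ^ (b / k)) / (δ - k * s)) s := by
  have hu : HasDerivAt (fun s => δ - k * s) (-k) s := by
    simpa using ((hasDerivAt_id s).const_mul k).const_sub δ
  refine ((hu.rpow_const (p := b / k) (Or.inl hs.ne')).const_mul C).congr_deriv ?_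
  rw [Real.rpow_sub_one hs.ne']
  field_simp

theorem hasDerivAt_affine_trajectory {κ b k δ s : ℝ} (hb : b ≠ 0) (hkb : k ≠ b)
    (hs : δ - k * s ≠ 0) :
    HasDerivAt (fun s => κ * (δ - b * s) / (b * (k - b)))
      ((κ * s - b * (κ * (δ - b * s) / (b * (k - b)))) / (δ - k * s)) s := by
  have hkb' : k - b ≠ 0 := sub_ne_zero.mpr hkb
  refine ((((hasDerivAt_id s).const_mul b).const_sub δ |>.const_mul κ).div_const
    (b * (k - b))).congr_deriv ?_
  field_simp
  ring

theorem stmt_3_general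
    (β βa κ δ C₀ : ℝ)
    (hβ : 0 < β) (hβa : 0 < βa) (hκ : 0 < κ)
    (hne : κ + β ≠ βa)
    (a : ℝ → ℝ)
    (ha : ∀ s, a s = C₀ * (δ - (κ + β) * s) ^ (βa / (κ + β))
        + κ * (δ - βa * s) / (βa * (κ + β - βa))) :
    ∀ s : ℝ, 0 < δ - (κ + β) * s →
      HasDerivAt a ((κ * s - βa * a s) / (δ - (κ + β) * s)) s := by
  intro s hs
  have homogeneous := hasDerivAt_const_mul_sub_mul_rpow_div (b := βa) (C := C₀)
    (by positivity : κ + β ≠ 0) hs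
  have particular := hasDerivAt_affine_trajectory (κ := κ) hβa.ne' hne hs.ne'
  rw [ha s, show a = _ from funext ha]
  refine (homogeneous.add particular).congr_deriv ?_
  ring

/-- Explicit solution of the trajectory ODE da/ds = (κs - βₐa)/(δ - (κ+β)s)
for the SAIS system without awareness decay. -/
theorem stmt_3
    (β βa κ δ C₀ : ℝ)
    (hβ : 0 < β) (hβa : 0 < βa) (hκ : 0 < κ) (hδ : 0 < δ)
    (hne : κ + β ≠ βa)
    (a : ℝ → ℝ)
    (ha : ∀ s, a s = C₀ * (δ - (κ + β) * s) ^ (βa / (κ + β))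
        + κ * (δ - βa * s) / (βa * (κ + β - βa))) :
    ∀ s : ℝ, 0 < δ - (κ + β) * s →
      HasDerivAt a ((κ * s - βa * a s) / (δ - (κ + β) * s)) s :=
  stmt_3_general β βa κ δ C₀ hβ hβa hκ hne a ha
end

section
/- For the SAIS system without awareness decay with 0 < βₐ < β ≤ δ and κ > 0, at every interior point of R with 0 ≤ a < 1-s and 0 ≤ s ≤ 1 and δ - (κ+β)s ≠ 0, the trajectory slope satisfies: if s < δ/(κ+β) then (κs - βₐ a)/(δ - (κ+β)s) > -1, and if s > δ/(κ+β) then (κs - βₐ a)/(δ - (κ+β)s) < -1. Consequently d(s+a)/dt = (1-s-a)(δ - βs - βₐ a) > 0 whenever s+a < 1, so s+a strictly increases along trajectories. -/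
/-- In the quick die-out regime βₐ < β ≤ δ, the trajectory slope is > -1 left of
the vertical nullcline and < -1 right of it, and s+a strictly increases. -/
theorem stmt_4
    (β βa κ δ : ℝ)
    (hβa : 0 < βa) (hβ : βa < β) (hβδ : β ≤ δ) (hκ : 0 < κ) :
    ∀ s a : ℝ, 0 ≤ a → a < 1 - s → 0 ≤ s → s ≤ 1 → δ - (κ + β) * s ≠ 0 →
      (s < δ / (κ + β) → (κ * s - βa * a) / (δ - (κ + β) * s) > -1) ∧
      (s > δ / (κ + β) → (κ * s - βa * a) / (δ - (κ + β) * s) < -1) ∧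
      (s + a < 1 → (1 - s - a) * (δ - β * s - βa * a) > 0) := by
  intro s a ha has hs hs1 hne
  have hκβ : 0 < κ + β := by linarith
  have key : β * s + βa * a < δ := by
    have h1 : βa * a < βa * (1 - s) := by nlinarith
    nlinarith [mul_le_mul_of_nonneg_right hs1 (le_of_lt (sub_pos.mpr hβ))]
  refine ⟨?_, ?_, ?_⟩
  · intro hlt
    have hd : 0 < δ - (κ + β) * s := by
      nlinarith [(lt_div_iff₀ hκβ).mp hlt]
    rw [gt_iff_lt, lt_div_iff₀ hd]
    nlinarith
  · intro hgt
    have hd : δ - (κ + β) * s < 0 := by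
      nlinarith [(div_lt_iff₀ hκβ).mp hgt]
    rw [div_lt_iff_of_neg hd]
    nlinarith
  · intro hsa
    apply mul_pos <;> nlinarith
end

section
/- For the SAIS system without awareness decay with 0 < βₐ < δ < β, the point (s*, a*) = (δ/(κ+β), κδ/(βₐ(κ+β))) is an equilibrium of the system, and it lies in the interior of R (i.e. s* + a* < 1 with s*, a* > 0) if and only if κ < κ* := βₐ(β-δ)/(δ-βₐ). At κ = κ* this equilibrium coincides with the boundary point (s₀*, 1-s₀*) where s₀* = (δ-βₐ)/(β-βₐ). -/
/-!
The equilibrium (s*, a*) is the common zero of the two second factors δ - (κ+β)s and κs - βₐa.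
Everything else follows from the identity
`1 - s* - a* = (δ - βₐ)(κ* - κ) / (βₐ(κ + β))`: its sign decides whether (s*, a*) lies in the
interior, and at κ = κ* it puts (s*, a*) on the edge s + a = 1, where κ* + β = δ(β - βₐ)/(δ - βₐ)
gives s* = s₀*.
-/

namespace SAIS

noncomputable def sStar (β κ δ : ℝ) : ℝ := δ / (κ + β)

noncomputable def aStar (β βa κ δ : ℝ) : ℝ := κ * δ / (βa * (κ + β))

noncomputable def kappaStar (β βa δ : ℝ) : ℝ := βa * (β - δ) / (δ - βa)

noncomputable def sZero (β βa δ : ℝ) : ℝ := (δ - βa) / (β - βa)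

variable {β βa κ δ : ℝ}

theorem sub_mul_sStar_eq_zero (hκβ : κ + β ≠ 0) : δ - (κ + β) * sStar β κ δ = 0 := by
  rw [sStar, mul_div_cancel₀ δ hκβ, sub_self]

theorem mul_sStar_sub_mul_aStar_eq_zero (hβa : βa ≠ 0) (hκβ : κ + β ≠ 0) :
    κ * sStar β κ δ - βa * aStar β βa κ δ = 0 := by
  unfold sStar aStar
  field_simp
  ring

theorem one_sub_sStar_sub_aStar (hβa : βa ≠ 0) (hκβ : κ + β ≠ 0) (hδβa : δ - βa ≠ 0) :
    1 - sStar β κ δ - aStar β βa κ δ =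
      (δ - βa) * (kappaStar β βa δ - κ) / (βa * (κ + β)) := by
  unfold sStar aStar kappaStar
  field_simp
  ring

theorem sStar_add_aStar_lt_one_iff (hβa : 0 < βa) (hκβ : 0 < κ + β) (hβaδ : βa < δ) :
    sStar β κ δ + aStar β βa κ δ < 1 ↔ κ < kappaStar β βa δ := by
  have hδβa : 0 < δ - βa := sub_pos.mpr hβaδ
  rw [← sub_pos, sub_add_eq_sub_sub,
    one_sub_sStar_sub_aStar hβa.ne' hκβ.ne' hδβa.ne', div_pos_iff_of_pos_right (by positivity),
    mul_pos_iff_of_pos_left hδβa, sub_pos]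

theorem kappaStar_add (hδβa : δ - βa ≠ 0) :
    kappaStar β βa δ + β = δ * (β - βa) / (δ - βa) := by
  unfold kappaStar
  field_simp
  ring

theorem sStar_kappaStar (hδ : δ ≠ 0) (hββa : β - βa ≠ 0) (hδβa : δ - βa ≠ 0) :
    sStar β (kappaStar β βa δ) δ = sZero β βa δ := by
  rw [sStar, kappaStar_add hδβa, sZero]
  field_simp

theorem aStar_kappaStar (hβa : βa ≠ 0) (hδ : δ ≠ 0) (hββa : β - βa ≠ 0) (hδβa : δ - βa ≠ 0) :
    aStar β βa (kappaStar β βa δ) δ = 1 - sZero β βa δ := by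
  have hκβ : kappaStar β βa δ + β ≠ 0 := by
    rw [kappaStar_add hδβa]
    exact div_ne_zero (mul_ne_zero hδ hββa) hδβa
  have hedge := one_sub_sStar_sub_aStar (δ := δ) hβa hκβ hδβa
  rw [sub_self, mul_zero, zero_div, sStar_kappaStar hδ hββa hδβa] at hedge
  linarith

end SAIS

open SAIS in
/-- The endemic equilibrium (s*,a*) of the SAIS model without decay, the
die-out threshold κ* and the bifurcation from (s₀*, 1-s₀*). -/
theorem stmt_6
    (β βa κ δ : ℝ)
    (hβa : 0 < βa) (hβaδ : βa < δ) (hδβ : δ < β) (hκ : 0 < κ) :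
    let s' := δ / (κ + β)
    let a' := κ * δ / (βa * (κ + β))
    let κstar := βa * (β - δ) / (δ - βa)
    let s₀ := (δ - βa) / (β - βa)
    ((1 - s' - a') * (δ - (κ + β) * s') = 0 ∧
      (1 - s' - a') * (κ * s' - βa * a') = 0) ∧
    ((s' + a' < 1 ∧ 0 < s' ∧ 0 < a') ↔ κ < κstar) ∧
    (κ = κstar → s' = s₀ ∧ a' = 1 - s₀) := by
  intro s' a' κstar s₀
  have hδ : 0 < δ := hβa.trans hβaδ
  have hκβ : 0 < κ + β := by linarith
  have hδβa : δ - βa ≠ 0 := (sub_pos.mpr hβaδ).ne'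
  have hββa : β - βa ≠ 0 := by linarith
  have hs' : 0 < s' := div_pos hδ hκβ
  have ha' : 0 < a' := div_pos (mul_pos hκ hδ) (mul_pos hβa hκβ)
  refine ⟨⟨mul_eq_zero_of_right _ (sub_mul_sStar_eq_zero hκβ.ne'),
      mul_eq_zero_of_right _ (mul_sStar_sub_mul_aStar_eq_zero hβa.ne' hκβ.ne')⟩,
    ⟨fun h ↦ (sStar_add_aStar_lt_one_iff hβa hκβ hβaδ).mp h.1,
      fun h ↦ ⟨(sStar_add_aStar_lt_one_iff hβa hκβ hβaδ).mpr h, hs', ha'⟩⟩, ?_⟩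
  rintro (rfl : κ = kappaStar β βa δ)
  exact ⟨sStar_kappaStar hδ.ne' hββa hδβa, aStar_kappaStar hβa.ne' hδ.ne' hββa hδβa⟩
end

section
/- For the SAIS system with awareness decay and 0 < βₐ < β ≤ δ, κ, δₐ > 0, let a₀(s) = (δ - βs)/βₐ and R = {(s,a) : s,a ≥ 0, s+a ≤ 1}; then for every s ∈ [0,1) with a₀(s) ≥ 0 one has a₀(s) > 1-s, and hence the system has no equilibrium in R other than the disease-free equilibrium (1,0). -/
/-- For βₐ < β ≤ δ, the line a₀(s) = (δ-βs)/βₐ lies above the region R and the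
disease-free equilibrium (1,0) is the only equilibrium in R. -/
theorem stmt_9
    (β βa κ δ δa : ℝ)
    (hβa : 0 < βa) (hβ : βa < β) (hβδ : β ≤ δ) (hκ : 0 < κ) (hδa : 0 < δa) :
    (∀ s : ℝ, 0 ≤ s → s ≤ 1 → s < 1 → 0 ≤ (δ - β * s) / βa →
      (δ - β * s) / βa > 1 - s) ∧
    (∀ s a : ℝ, 0 ≤ s → 0 ≤ a → s + a ≤ 1 →
      (1 - s - a) * (δ - (κ + β) * s) + δa * a = 0 →
      (1 - s - a) * (κ * s - βa * a) - δa * a = 0 →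
      s = 1 ∧ a = 0) := by
  have key : ∀ s : ℝ, s ≤ 1 → s < 1 → (δ - β * s) / βa > 1 - s := by
    intro s hs1 hs1'
    rw [gt_iff_lt, lt_div_iff₀ hβa]
    have h1 : 0 < 1 - s := by linarith
    nlinarith [mul_pos (sub_pos.mpr hβ) h1]
  constructor
  · intro s hs0 hs1 hs1' _
    exact key s hs1 hs1'
  · intro s a hs0 ha0 hsa h1 h2
    -- sum: (1-s-a)(δ - βs - βa a) = 0
    have hsum : (1 - s - a) * (δ - β * s - βa * a) = 0 := by nlinarith
    rcases mul_eq_zero.mp hsum with hu | hl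
    · -- 1 - s - a = 0 ⇒ from h1, δa * a = 0 ⇒ a = 0, s = 1
      have ha : a = 0 := by
        have : δa * a = 0 := by rw [hu, zero_mul, zero_add] at h1; exact h1
        exact (mul_eq_zero.mp this).resolve_left (ne_of_gt hδa)
      constructor <;> linarith
    · -- a = (δ - βs)/βa
      have ha : a = (δ - β * s) / βa := by
        field_simp
        linarith
      have hs : s = 1 := by
        by_contra hne
        have hlt : s < 1 := lt_of_le_of_ne (by linarith) hne
        have := key s (by linarith) hlt
        rw [← ha] at this
        linarith
      exact ⟨hs, by linarith⟩
end

section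
/- If β, κ, δ, δₐ > 0 and δ < κ+β, then the derivative of a₁(s) = (1-s)(δ-(κ+β)s)/(δ-δₐ-(κ+β)s) satisfies a₁'(δ/(κ+β)) > 0 and -1 < a₁'(1) < 0, where a₁'(1) = (κ+β-δ)/(δ-δₐ-(κ+β)). -/
/-
Both points are zeros of the numerator p(s) = (1 - s)(δ - (κ + β)s) at which the denominator
q(s) = δ - δa - (κ + β)s does not vanish, so the quotient rule collapses to a₁' = p'/q there.
This gives a₁'(δ/(κ + β)) = (κ + β - δ)/δa and a₁'(1) = (κ + β - δ)/(δ - δa - (κ + β)),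
whose signs and the bound -1 < a₁'(1) are immediate from δ < κ + β and δa > 0.
-/

theorem HasDerivAt.div_of_apply_eq_zero {𝕜 : Type*} [NontriviallyNormedField 𝕜]
    {f g : 𝕜 → 𝕜} {f' g' x : 𝕜} (hf : HasDerivAt f f' x) (hg : HasDerivAt g g' x)
    (hgx : g x ≠ 0) (hfx : f x = 0) :
    HasDerivAt (fun y => f y / g y) (f' / g x) x :=
  (hf.fun_div hg hgx).congr_deriv (by rw [hfx, zero_mul, sub_zero, sq, mul_div_mul_right _ _ hgx])

theorem hasDerivAt_one_sub_mul_sub_mul (c δ x : ℝ) :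
    HasDerivAt (fun s => (1 - s) * (δ - c * s)) (-(δ - c * x) - c * (1 - x)) x :=
  (((hasDerivAt_id' x).const_sub 1).fun_mul
    (((hasDerivAt_id' x).const_mul c).const_sub δ)).congr_deriv (by ring)

theorem hasDerivAt_sub_mul (c e x : ℝ) : HasDerivAt (fun s => e - c * s) (-c) x :=
  (((hasDerivAt_id' x).const_mul c).const_sub e).congr_deriv (by ring)

theorem hasDerivAt_one_sub_mul_sub_mul_div_of_eq_zero {c δ e x : ℝ}
    (hp : (1 - x) * (δ - c * x) = 0) (hq : e - c * x ≠ 0) :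
    HasDerivAt (fun s => (1 - s) * (δ - c * s) / (e - c * s))
      ((-(δ - c * x) - c * (1 - x)) / (e - c * x)) x :=
  (hasDerivAt_one_sub_mul_sub_mul c δ x).div_of_apply_eq_zero (hasDerivAt_sub_mul c e x) hq hp

theorem stmt_12_general
    (β κ δ δa : ℝ)
    (hδ : 0 < δ) (hδa : 0 < δa)
    (h : δ < κ + β)
    (a₁ : ℝ → ℝ)
    (ha₁ : ∀ s, a₁ s = (1 - s) * (δ - (κ + β) * s) / (δ - δa - (κ + β) * s)) :
    0 < deriv a₁ (δ / (κ + β)) ∧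
    deriv a₁ 1 = (κ + β - δ) / (δ - δa - (κ + β)) ∧
    -1 < deriv a₁ 1 ∧ deriv a₁ 1 < 0 := by
  obtain rfl : a₁ = fun s => (1 - s) * (δ - (κ + β) * s) / (δ - δa - (κ + β) * s) := funext ha₁
  set c := κ + β
  have hs₀ : c * (δ / c) = δ := mul_div_cancel₀ δ (hδ.trans h).ne'
  have hq : δ - δa - c < 0 := by linarith
  have hd₀ : deriv (fun s => (1 - s) * (δ - c * s) / (δ - δa - c * s)) (δ / c) = (c - δ) / δa := by
    refine (hasDerivAt_one_sub_mul_sub_mul_div_of_eq_zero ?_ ?_).deriv.trans ?_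
    · rw [hs₀, sub_self, mul_zero]
    · rw [hs₀]; linarith
    · rw [mul_one_sub, hs₀]; ring
  have hd₁ : deriv (fun s => (1 - s) * (δ - c * s) / (δ - δa - c * s)) 1 =
      (c - δ) / (δ - δa - c) := by
    refine (hasDerivAt_one_sub_mul_sub_mul_div_of_eq_zero ?_ ?_).deriv.trans ?_
    · ring
    · rw [mul_one]; exact hq.ne
    · ring
  refine ⟨hd₀ ▸ div_pos (by linarith) hδa, hd₁, ?_, ?_⟩
  · rw [hd₁, lt_div_iff_of_neg hq]
    linarith
  · rw [hd₁]
    exact div_neg_of_pos_of_neg (by linarith) hq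

/-- Endpoint slopes of the vertical nullcline a₁ when δ < κ+β. -/
theorem stmt_12
    (β κ δ δa : ℝ)
    (hβ : 0 < β) (hκ : 0 < κ) (hδ : 0 < δ) (hδa : 0 < δa)
    (h : δ < κ + β)
    (a₁ : ℝ → ℝ)
    (ha₁ : ∀ s, a₁ s = (1 - s) * (δ - (κ + β) * s) / (δ - δa - (κ + β) * s)) :
    0 < deriv a₁ (δ / (κ + β)) ∧
    deriv a₁ 1 = (κ + β - δ) / (δ - δa - (κ + β)) ∧
    -1 < deriv a₁ 1 ∧ deriv a₁ 1 < 0 :=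
  stmt_12_general β κ δ δa hδ hδa h a₁ ha₁
end

section
/- If β, κ, δ, δₐ > 0 and δ < κ+β, then M = ((δ-δₐ) + √(δₐ² + δₐ(κ+β-δ)))/(κ+β) satisfies δ/(κ+β) < M < 1, and M is the unique critical point of a₁(s) = (1-s)(δ-(κ+β)s)/(δ-δₐ-(κ+β)s) in the interval (δ/(κ+β), 1). -/
/-!
Writing `c = κ + β` and `D = δa² + δa (c - δ)`, the derivative of `a₁` is
`(D - (c s - (δ - δa))²) / (δ - δa - c s)²`. Where `c s > δ` the denominator is nonzero and
`c s - (δ - δa) > δa > 0`, so the derivative vanishes exactly when `c s - (δ - δa) = √D`,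
i.e. at `s = M`. The bounds on `M` amount to `δa < √D < c - δ + δa`.
-/

open Real

noncomputable def nullcline (c δ δa s : ℝ) : ℝ := (1 - s) * (δ - c * s) / (δ - δa - c * s)

section Nullcline

variable {c δ δa : ℝ}

theorem hasDerivAt_nullcline {s : ℝ} (hs : δ - δa - c * s ≠ 0) :
    HasDerivAt (nullcline c δ δa)
      ((δa ^ 2 + δa * (c - δ) - (c * s - (δ - δa)) ^ 2) / (δ - δa - c * s) ^ 2) s := by
  have hnum : HasDerivAt (fun s => (1 - s) * (δ - c * s)) (-(δ - c * s) + (1 - s) * -c) s := by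
    simpa using ((hasDerivAt_id s).const_sub 1).fun_mul
      (((hasDerivAt_id s).const_mul c).const_sub δ)
  have hden : HasDerivAt (fun s => δ - δa - c * s) (-c) s := by
    simpa using ((hasDerivAt_id s).const_mul c).const_sub (δ - δa)
  exact (hnum.fun_div hden hs).congr_deriv (by ring)

theorem deriv_nullcline_eq_zero_iff (hδa : 0 < δa) {s : ℝ} (hs : δ < c * s) :
    deriv (nullcline c δ δa) s = 0 ↔ c * s = δ - δa + √(δa ^ 2 + δa * (c - δ)) := by
  have hden : δ - δa - c * s ≠ 0 := by linarith
  rw [(hasDerivAt_nullcline hden).deriv, div_eq_zero_iff, or_iff_left (pow_ne_zero 2 hden),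
    sub_eq_zero, pow_two (c * s - (δ - δa)), eq_comm,
    ← sqrt_eq_iff_mul_self_eq_of_pos (by linarith)]
  constructor <;> intro h <;> linarith

theorem lt_sqrt_disc (hδa : 0 < δa) (hδc : δ < c) : δa < √(δa ^ 2 + δa * (c - δ)) := by
  rw [lt_sqrt hδa.le]
  nlinarith

theorem sqrt_disc_lt (hδa : 0 < δa) (hδc : δ < c) : √(δa ^ 2 + δa * (c - δ)) < c - δ + δa := by
  rw [sqrt_lt' (by linarith)]
  nlinarith

end Nullcline

theorem stmt_13_general
    (β κ δ δa : ℝ)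
    (hβ : 0 < β) (hκ : 0 < κ) (hδa : 0 < δa)
    (h : δ < κ + β)
    (a₁ : ℝ → ℝ)
    (ha₁ : ∀ s, a₁ s = (1 - s) * (δ - (κ + β) * s) / (δ - δa - (κ + β) * s)) :
    let M := ((δ - δa) + Real.sqrt (δa ^ 2 + δa * (κ + β - δ))) / (κ + β)
    δ / (κ + β) < M ∧ M < 1 ∧ deriv a₁ M = 0 ∧
    (∀ x : ℝ, δ / (κ + β) < x → x < 1 → deriv a₁ x = 0 → x = M) := by
  intro M
  obtain rfl : a₁ = nullcline (κ + β) δ δa := funext ha₁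
  have hc : 0 < κ + β := by positivity
  have hcM : (κ + β) * M = δ - δa + √(δa ^ 2 + δa * (κ + β - δ)) := mul_div_cancel₀ _ hc.ne'
  have hδM : δ < (κ + β) * M := by linarith [lt_sqrt_disc hδa h]
  refine ⟨(div_lt_iff₀' hc).2 hδM, ?_, (deriv_nullcline_eq_zero_iff hδa hδM).2 hcM, ?_⟩
  · exact (div_lt_one hc).2 (by linarith [sqrt_disc_lt hδa h])
  · intro x hx _ hcrit
    have hδx : δ < (κ + β) * x := (div_lt_iff₀' hc).1 hx
    exact mul_left_cancel₀ hc.ne' (((deriv_nullcline_eq_zero_iff hδa hδx).1 hcrit).trans hcM.symm)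

/-- M is the unique critical point of the vertical nullcline a₁ in
(δ/(κ+β), 1), and δ/(κ+β) < M < 1. -/
theorem stmt_13
    (β κ δ δa : ℝ)
    (hβ : 0 < β) (hκ : 0 < κ) (hδ : 0 < δ) (hδa : 0 < δa)
    (h : δ < κ + β)
    (a₁ : ℝ → ℝ)
    (ha₁ : ∀ s, a₁ s = (1 - s) * (δ - (κ + β) * s) / (δ - δa - (κ + β) * s)) :
    let M := ((δ - δa) + Real.sqrt (δa ^ 2 + δa * (κ + β - δ))) / (κ + β)
    δ / (κ + β) < M ∧ M < 1 ∧ deriv a₁ M = 0 ∧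
    (∀ x : ℝ, δ / (κ + β) < x → x < 1 → deriv a₁ x = 0 → x = M) :=
  stmt_13_general β κ δ δa hβ hκ hδa h a₁ ha₁
end

section
/- For the SAIS system with awareness decay and βₐ, β, κ, δₐ, δ > 0 with β > δ, the region R contains at most one equilibrium other than the disease-free equilibrium (1,0); if it exists, it has the form (s*, (δ - βs*)/βₐ) with s* ∈ (δ/(κ+β), 1) the unique solution there of a₀(s) = a₁(s), where a₀(s) = (δ-βs)/βₐ and a₁(s) = (1-s)(δ-(κ+β)s)/(δ-δₐ-(κ+β)s). -/
/-- Key quadratic uniqueness lemma. -/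
lemma sais_key (β βa κ δ δa : ℝ)
    (hβa : 0 < βa) (hβ : 0 < β) (hκ : 0 < κ) (hδa : 0 < δa) (hδ : 0 < δ)
    (hβab : βa < β)
    (s s' : ℝ) (hs : δ < (κ + β) * s) (hs' : δ < (κ + β) * s')
    (hPs : (δ - β * s) * (δ - δa - (κ + β) * s) = βa * (1 - s) * (δ - (κ + β) * s))
    (hPs' : (δ - β * s') * (δ - δa - (κ + β) * s') = βa * (1 - s') * (δ - (κ + β) * s')) :
    s = s' := by
  by_contra hne
  have h3 : (s - s') * ((κ + β) * (β - βa) * (s + s') +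
      (βa * (κ + β + δ) + β * δa - (κ + β) * δ - β * δ)) = 0 := by
    linear_combination hPs - hPs'
  have h4 : (κ + β) * (β - βa) * (s + s') +
      (βa * (κ + β + δ) + β * δa - (κ + β) * δ - β * δ) = 0 := by
    rcases mul_eq_zero.1 h3 with h | h
    · exact absurd (sub_eq_zero.1 h) hne
    · exact h
  have h5 : (β - βa) * ((κ + β) * s - δ) * ((κ + β) * s' - δ) = -(δ * δa * κ) := by
    linear_combination ((κ + β) * s - δ) * h4 - (κ + β) * hPs
  nlinarith [mul_pos (mul_pos (sub_pos.2 hβab) (sub_pos.2 hs)) (sub_pos.2 hs'),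
    mul_pos (mul_pos hδ hδa) hκ]

/-- Derivation of the line/nullcline form for any non-DFE equilibrium. -/
lemma sais_equil (β βa κ δ δa : ℝ)
    (hβa : 0 < βa) (hβ : 0 < β) (hκ : 0 < κ) (hδa : 0 < δa) (hδ : 0 < δ)
    (s a : ℝ) (hs : 0 ≤ s) (ha : 0 ≤ a) (hsa : s + a ≤ 1)
    (hne : (s, a) ≠ ((1 : ℝ), (0 : ℝ)))
    (e1 : (1 - s - a) * (δ - (κ + β) * s) + δa * a = 0)
    (e2 : (1 - s - a) * (κ * s - βa * a) - δa * a = 0) :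
    βa * a = δ - β * s ∧ δ < (κ + β) * s ∧ s < 1 ∧
    (δ - β * s) * (δ - δa - (κ + β) * s) = βa * (1 - s) * (δ - (κ + β) * s) := by
  have hi : 0 ≤ 1 - s - a := by linarith
  have hipos : 0 < 1 - s - a := by
    rcases hi.lt_or_eq with h | h
    · exact h
    · exfalso
      have ha0 : a = 0 := by
        have h0 : 1 - s - a = 0 := h.symm
        rw [h0, zero_mul, zero_add] at e1
        rcases mul_eq_zero.1 e1 with h' | h'
        · exact absurd h' hδa.ne'
        · exact h'
      have hs1 : s = 1 := by linarith
      exact hne (by simp [hs1, ha0])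
  have hsum : (1 - s - a) * (δ - β * s - βa * a) = 0 := by linear_combination e1 + e2
  have hab : βa * a = δ - β * s := by
    rcases mul_eq_zero.1 hsum with h' | h'
    · exact absurd h' hipos.ne'
    · linarith
  have hapos : 0 < a := by
    rcases ha.lt_or_eq with h' | h'
    · exact h'
    · exfalso
      have ha0 : a = 0 := h'.symm
      have hds : δ = β * s := by
        have := hab; rw [ha0] at this; linarith [this]
      have h1s : (1 - s) * (δ - (κ + β) * s) = 0 := by
        have := e1; rw [ha0] at this; linarith [this]
      rcases mul_eq_zero.1 h1s with h'' | h''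
      · have : s = 1 := by linarith
        exact hne (by simp [this, ha0])
      · have hs0 : κ * s = 0 := by linarith
        rcases mul_eq_zero.1 hs0 with h3 | h3
        · exact absurd h3 hκ.ne'
        · rw [h3] at hds; simp at hds; linarith
  have hslt : δ < (κ + β) * s := by
    by_contra hcon
    push_neg at hcon
    have h1 : 0 ≤ (1 - s - a) * (δ - (κ + β) * s) :=
      mul_nonneg hipos.le (by linarith)
    nlinarith [mul_pos hδa hapos]
  have hs1 : s < 1 := by nlinarith
  refine ⟨hab, hslt, hs1, ?_⟩
  linear_combination (-(δ - δa - (κ + β) * s)) * hab - βa * e1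

/-- For β > δ, the region R contains at most one equilibrium of the SAIS system
with awareness decay other than the DFE (1,0); it has the form
(s*, (δ-βs*)/βₐ) with s* the unique solution of a₀(s)=a₁(s) in (δ/(κ+β), 1). -/
theorem stmt_17
    (β βa κ δ δa : ℝ)
    (hβa : 0 < βa) (hβ : 0 < β) (hκ : 0 < κ) (hδa : 0 < δa) (hδ : 0 < δ)
    (hβab : βa < β) (h : δ < β)
    (a₀ a₁ : ℝ → ℝ)
    (ha₀ : ∀ s, a₀ s = (δ - β * s) / βa)
    (ha₁ : ∀ s, a₁ s = (1 - s) * (δ - (κ + β) * s) / (δ - δa - (κ + β) * s)) :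
    (∀ s a s' a' : ℝ,
      0 ≤ s → 0 ≤ a → s + a ≤ 1 → (s, a) ≠ ((1 : ℝ), (0 : ℝ)) →
      (1 - s - a) * (δ - (κ + β) * s) + δa * a = 0 →
      (1 - s - a) * (κ * s - βa * a) - δa * a = 0 →
      0 ≤ s' → 0 ≤ a' → s' + a' ≤ 1 → (s', a') ≠ ((1 : ℝ), (0 : ℝ)) →
      (1 - s' - a') * (δ - (κ + β) * s') + δa * a' = 0 →
      (1 - s' - a') * (κ * s' - βa * a') - δa * a' = 0 →
      s = s' ∧ a = a') ∧
    (∀ s a : ℝ,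
      0 ≤ s → 0 ≤ a → s + a ≤ 1 → (s, a) ≠ ((1 : ℝ), (0 : ℝ)) →
      (1 - s - a) * (δ - (κ + β) * s) + δa * a = 0 →
      (1 - s - a) * (κ * s - βa * a) - δa * a = 0 →
      a = (δ - β * s) / βa ∧ δ / (κ + β) < s ∧ s < 1 ∧ a₀ s = a₁ s ∧
      (∀ s' : ℝ, δ / (κ + β) < s' → s' < 1 → a₀ s' = a₁ s' → s' = s)) := by
  have hc : 0 < κ + β := by linarith
  constructor
  · intro s a s' a' hs ha hsa hne e1 e2 hs' ha' hsa' hne' e1' e2'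
    obtain ⟨hab, hslt, hs1, hP⟩ := sais_equil β βa κ δ δa hβa hβ hκ hδa hδ s a hs ha hsa hne e1 e2
    obtain ⟨hab', hslt', hs1', hP'⟩ := sais_equil β βa κ δ δa hβa hβ hκ hδa hδ s' a' hs' ha' hsa' hne' e1' e2'
    have hss : s = s' := sais_key β βa κ δ δa hβa hβ hκ hδa hδ hβab s s' hslt hslt' hP hP'
    refine ⟨hss, ?_⟩
    have : βa * a = βa * a' := by rw [hab, hab', hss]
    exact mul_left_cancel₀ hβa.ne' this
  · intro s a hs ha hsa hne e1 e2
    obtain ⟨hab, hslt, hs1, hP⟩ := sais_equil β βa κ δ δa hβa hβ hκ hδa hδ s a hs ha hsa hne e1 e2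
    have hden : δ - δa - (κ + β) * s < 0 := by nlinarith
    refine ⟨?_, ?_, hs1, ?_, ?_⟩
    · field_simp
      linarith [hab]
    · rw [div_lt_iff₀ hc]; linarith
    · rw [ha₀, ha₁, div_eq_div_iff hβa.ne' hden.ne]
      linear_combination hP
    · intro s' hps' hs1' heq
      have hslt' : δ < (κ + β) * s' := by
        rw [div_lt_iff₀ hc] at hps'; linarith
      have hden' : δ - δa - (κ + β) * s' < 0 := by nlinarith
      rw [ha₀, ha₁, div_eq_div_iff hβa.ne' hden'.ne] at heq
      have hP' : (δ - β * s') * (δ - δa - (κ + β) * s') = βa * (1 - s') * (δ - (κ + β) * s') := by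
        linear_combination heq
      exact (sais_key β βa κ δ δa hβa hβ hκ hδa hδ hβab s s' hslt hslt' hP hP').symm
end

section
/- Let φ(s,a) = 1/(1-s-a) and let (f₁, f₂) be the right-hand side of the SAIS system with awareness decay: f₁ = (1-s-a)(δ-(κ+β)s)+δₐa, f₂ = (1-s-a)(κs-βₐa)-δₐa. Then for all (s,a) with s+a < 1, the divergence ∂(φf₁)/∂s + ∂(φf₂)/∂a equals -(κ + β + βₐ) - δₐ/(1-s-a), which is strictly negative when β, βₐ, κ, δₐ > 0. -/
/-! With `u = 1 - s - a`, dividing by the Dulac function's denominator splits off the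
singular part: `f₁ / u = δ - (κ + β) s + δₐ a / u` and
`f₂ / u = κ s - βₐ a + δₐ - δₐ (1 - s) / u`. Differentiating these two expressions and adding,
the singular terms combine to `δₐ (a - (1 - s)) / u² = -δₐ / u`. -/

open Topology

theorem hasDerivAt_div_sub (b c x : ℝ) (hx : c - x ≠ 0) :
    HasDerivAt (fun x => b / (c - x)) (b / (c - x) ^ 2) x := by
  simpa only [div_eq_mul_inv, neg_neg, one_mul, Pi.inv_apply] using
    (((hasDerivAt_id' x).const_sub c).inv hx).const_mul b

section SAIS

variable (β βa κ δ δa : ℝ) {s a : ℝ}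

theorem deriv_dulac_weighted_first (hsa : s + a < 1) :
    deriv (fun x => 1 / (1 - x - a) * ((1 - x - a) * (δ - (κ + β) * x) + δa * a)) s
      = -(κ + β) + δa * a / (1 - s - a) ^ 2 := by
  have hsplit : (fun x => 1 / (1 - x - a) * ((1 - x - a) * (δ - (κ + β) * x) + δa * a))
      =ᶠ[𝓝 s] fun x => δ - (κ + β) * x + δa * a / ((1 - a) - x) := by
    filter_upwards [Iio_mem_nhds (show s < 1 - a by linarith)] with x hx
    have hu : 1 - x - a ≠ 0 := by linarith [Set.mem_Iio.mp hx]
    rw [show (1 - a) - x = 1 - x - a by ring]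
    field_simp
  have hderiv : HasDerivAt (fun x => δ - (κ + β) * x + δa * a / ((1 - a) - x))
      (-(κ + β) + δa * a / ((1 - a) - s) ^ 2) s :=
    ((((hasDerivAt_id' s).const_mul (κ + β)).const_sub δ).add
      (hasDerivAt_div_sub (δa * a) (1 - a) s (by linarith))).congr_deriv (by ring)
  rw [hsplit.deriv_eq, hderiv.deriv, show (1 - a) - s = 1 - s - a by ring]

theorem deriv_dulac_weighted_second (hsa : s + a < 1) :
    deriv (fun y => 1 / (1 - s - y) * ((1 - s - y) * (κ * s - βa * y) - δa * y)) a
      = -βa - δa * (1 - s) / (1 - s - a) ^ 2 := by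
  have hsplit : (fun y => 1 / (1 - s - y) * ((1 - s - y) * (κ * s - βa * y) - δa * y))
      =ᶠ[𝓝 a] fun y => κ * s - βa * y + δa + -(δa * (1 - s)) / ((1 - s) - y) := by
    filter_upwards [Iio_mem_nhds (show a < 1 - s by linarith)] with y hy
    have hu : 1 - s - y ≠ 0 := by linarith [Set.mem_Iio.mp hy]
    field_simp
    ring
  have hderiv : HasDerivAt (fun y => κ * s - βa * y + δa + -(δa * (1 - s)) / ((1 - s) - y))
      (-βa + -(δa * (1 - s)) / ((1 - s) - a) ^ 2) a :=
    (((((hasDerivAt_id' a).const_mul βa).const_sub (κ * s)).add_const δa).add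
      (hasDerivAt_div_sub (-(δa * (1 - s))) (1 - s) a (by linarith))).congr_deriv (by ring)
  rw [hsplit.deriv_eq, hderiv.deriv, neg_div, ← sub_eq_add_neg]

end SAIS

theorem stmt_18_general
    (β βa κ δ δa : ℝ)
    (hβ : 0 < β) (hβa : 0 < βa) (hκ : 0 < κ) (hδa : 0 < δa)
    (f₁ f₂ : ℝ → ℝ → ℝ)
    (hf₁ : ∀ s a, f₁ s a = (1 - s - a) * (δ - (κ + β) * s) + δa * a)
    (hf₂ : ∀ s a, f₂ s a = (1 - s - a) * (κ * s - βa * a) - δa * a) :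
    ∀ s a : ℝ, s + a < 1 →
      deriv (fun x => (1 / (1 - x - a)) * f₁ x a) s
        + deriv (fun y => (1 / (1 - s - y)) * f₂ s y) a
        = -(κ + β + βa) - δa / (1 - s - a) ∧
      -(κ + β + βa) - δa / (1 - s - a) < 0 := by
  intro s a hsa
  have hu : 0 < 1 - s - a := by linarith
  simp only [hf₁, hf₂]
  refine ⟨?_, ?_⟩
  · rw [deriv_dulac_weighted_first β κ δ δa hsa, deriv_dulac_weighted_second βa κ δa hsa]
    field_simp
    ring
  · linarith [div_pos hδa hu]

/-- Dulac function computation: with φ(s,a) = 1/(1-s-a) the divergence of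
(φf₁, φf₂) equals -(κ+β+βₐ) - δₐ/(1-s-a) < 0 for s+a < 1. -/
theorem stmt_18
    (β βa κ δ δa : ℝ)
    (hβ : 0 < β) (hβa : 0 < βa) (hκ : 0 < κ) (hδ : 0 < δ) (hδa : 0 < δa)
    (f₁ f₂ : ℝ → ℝ → ℝ)
    (hf₁ : ∀ s a, f₁ s a = (1 - s - a) * (δ - (κ + β) * s) + δa * a)
    (hf₂ : ∀ s a, f₂ s a = (1 - s - a) * (κ * s - βa * a) - δa * a) :
    ∀ s a : ℝ, s + a < 1 →
      deriv (fun x => (1 / (1 - x - a)) * f₁ x a) s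
        + deriv (fun y => (1 / (1 - s - y)) * f₂ s y) a
        = -(κ + β + βa) - δa / (1 - s - a) ∧
      -(κ + β + βa) - δa / (1 - s - a) < 0 :=
  stmt_18_general β βa κ δ δa hβ hβa hκ hδa f₁ f₂ hf₁ hf₂
end
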